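/- For 0 ≤ k ≤ n and 0 ≤ r < s, C(n,k) · ∏_{i=0}^{n−k−1}(2s − 2r − i) = Σ_{j=k}^{n} (−1)^{n−j} · L_r(n,j) · L_s(j,k), where the product is the falling factorial (2s−2r)·(2s−2r−1)···(2s−2r−(n−k−1)). -/

import Mathlib

/-!
Write `d = 2s - 2r`. Both sides of the identity, as functions `T(n, k)`, satisfy
`T(0, k) = δ_{k,0}`, `T(n+1, 0) = (d - n) T(n, 0)` and
`T(n+1, k+1) = T(n, k) + (d + k + 1 - n) T(n, k+1)`.
For the binomial side this is Pascal's rule together with one step of the falling factorial. For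
the alternating sum, expanding `L_r(n+1, j)` by its recurrence and shifting the index leaves the
inner factor `L_s(j+1, k) - (n + j + 2r) L_s(j, k)`; the recurrence of `L_s` rewrites it as
`L_s(j, k-1) + (d + k - n) L_s(j, k)`, in which `r` and `s` enter only through `d`.
-/

open Finset

/-- The r-Lah numbers `L_r(n,k)` as integers. -/
def rLah (r : ℕ) : ℕ → ℕ → ℤ
  | 0, 0 => 1
  | 0, _ + 1 => 0
  | n + 1, 0 => ((n : ℤ) + 2 * r) * rLah r n 0
  | n + 1, k + 1 => rLah r n k + ((n : ℤ) + (k + 1) + 2 * r) * rLah r n (k + 1)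

/-- The unsigned r-Stirling numbers of the first kind `c_r(n,k)` as integers. -/
def rStirling1 (r : ℕ) : ℕ → ℕ → ℤ
  | 0, 0 => 1
  | 0, _ + 1 => 0
  | n + 1, 0 => ((n : ℤ) + r) * rStirling1 r n 0
  | n + 1, k + 1 => rStirling1 r n k + ((n : ℤ) + r) * rStirling1 r n (k + 1)

/-- The r-Stirling numbers of the second kind `S_r(n,k)` as integers. -/
def rStirling2 (r : ℕ) : ℕ → ℕ → ℤ
  | 0, 0 => 1
  | 0, _ + 1 => 0
  | n + 1, 0 => (r : ℤ) * rStirling2 r n 0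
  | n + 1, k + 1 => rStirling2 r n k + ((k : ℤ) + 1 + r) * rStirling2 r n (k + 1)


lemma rLah_eq_zero_of_lt (r : ℕ) : ∀ {n k : ℕ}, n < k → rLah r n k = 0
  | 0, _ + 1, _ => rfl
  | n + 1, k + 1, h => by
      rw [rLah, rLah_eq_zero_of_lt r (by omega : n < k),
        rLah_eq_zero_of_lt r (by omega : n < k + 1), mul_zero, add_zero]

lemma rLah_succ_zero (r n : ℕ) : rLah r (n + 1) 0 = ((n : ℤ) + 2 * r) * rLah r n 0 := rfl

lemma rLah_succ_succ (r n k : ℕ) :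
    rLah r (n + 1) (k + 1) = rLah r n k + ((n : ℤ) + (k + 1) + 2 * r) * rLah r n (k + 1) := rfl

lemma choose_mul_prod_range_sub_succ_succ {R : Type*} [CommRing R] (d : R) (n k : ℕ) :
    ((n + 1).choose (k + 1) : R) * ∏ i ∈ range (n + 1 - (k + 1)), (d - i) =
      (n.choose k : R) * ∏ i ∈ range (n - k), (d - i) +
        (d + (k + 1) - n) * ((n.choose (k + 1) : R) * ∏ i ∈ range (n - (k + 1)), (d - i)) := by
  rw [Nat.add_sub_add_right, Nat.choose_succ_succ, Nat.cast_add, add_mul, add_right_inj]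
  rcases lt_or_ge k n with hkn | hnk
  · rw [show n - k = n - (k + 1) + 1 by omega, prod_range_succ, Nat.cast_sub hkn]
    push_cast
    ring
  · simp [Nat.choose_eq_zero_of_lt (Nat.lt_succ_of_le hnk)]

lemma neg_one_pow_sub_of_le {R : Type*} [Monoid R] [HasDistribNeg R] {j n : ℕ} (h : j ≤ n) :
    (-1 : R) ^ (n - j) = (-1) ^ n * (-1) ^ j := by
  conv_rhs => rw [← Nat.sub_add_cancel h, pow_add, mul_assoc, pow_mul_pow_eq_one j (by simp)]
  rw [mul_one]

-- The sign `(-1) ^ j` in place of the theorem's `(-1) ^ (n - j)` keeps truncated subtraction out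
-- of the recurrences.
def altLahSum (r s n k : ℕ) : ℤ :=
  ∑ j ∈ range (n + 1), (-1) ^ j * rLah r n j * rLah s j k

lemma altLahSum_succ (r s n k : ℕ) :
    altLahSum r s (n + 1) k = ∑ j ∈ range (n + 1),
      (-1) ^ j * rLah r n j * (((n : ℤ) + j + 2 * r) * rLah s j k - rLah s (j + 1) k) := by
  set f : ℕ → ℤ := fun j ↦ (-1) ^ j * rLah r (n + 1) j * rLah s j k
  set g : ℕ → ℤ := fun j ↦ (-1) ^ j * (((n : ℤ) + j + 2 * r) * rLah r n j) * rLah s j k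
  set h : ℕ → ℤ := fun j ↦ (-1) ^ j * rLah r n j * rLah s (j + 1) k
  calc altLahSum r s (n + 1) k = ∑ j ∈ range (n + 1), f (j + 1) + f 0 := sum_range_succ' f _
    _ = ∑ j ∈ range (n + 1), (g (j + 1) - h j) + g 0 := by
      congr 1
      refine sum_congr rfl fun j _ ↦ ?_
      simp only [f, g, h, rLah_succ_succ]
      push_cast
      ring
    _ = ∑ j ∈ range (n + 2), g j - ∑ j ∈ range (n + 1), h j := by
      rw [sum_range_succ' g, sum_sub_distrib]
      ring
    _ = ∑ j ∈ range (n + 1), g j - ∑ j ∈ range (n + 1), h j := by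
      have hg_top : g (n + 1) = 0 := by simp [g, rLah_eq_zero_of_lt r (Nat.lt_succ_self n)]
      rw [sum_range_succ, hg_top, add_zero]
    _ = _ := by
      rw [← sum_sub_distrib]
      refine sum_congr rfl fun j _ ↦ ?_
      ring

lemma altLahSum_succ_zero (r s n : ℕ) :
    altLahSum r s (n + 1) 0 = ((n : ℤ) - (2 * s - 2 * r)) * altLahSum r s n 0 := by
  rw [altLahSum_succ, altLahSum, mul_sum]
  refine sum_congr rfl fun j _ ↦ ?_
  rw [rLah_succ_zero]
  ring

lemma altLahSum_succ_succ (r s n k : ℕ) :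
    altLahSum r s (n + 1) (k + 1) =
      -(altLahSum r s n k + (2 * s - 2 * r + (k + 1) - n) * altLahSum r s n (k + 1)) := by
  rw [altLahSum_succ, altLahSum, altLahSum, mul_sum, ← sum_add_distrib, ← sum_neg_distrib]
  refine sum_congr rfl fun j _ ↦ ?_
  rw [rLah_succ_succ]
  ring

lemma altLahSum_eq (r s n k : ℕ) :
    altLahSum r s n k =
      (-1) ^ n * ((n.choose k : ℤ) * ∏ i ∈ range (n - k), (2 * (s : ℤ) - 2 * r - i)) := by
  induction n generalizing k with
  | zero => cases k <;> simp [altLahSum, rLah]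
  | succ n ih =>
    cases k with
    | zero =>
      rw [altLahSum_succ_zero, ih, Nat.sub_zero, Nat.sub_zero, prod_range_succ]
      simp only [Nat.choose_zero_right, Nat.cast_one]
      ring
    | succ k =>
      rw [altLahSum_succ_succ, ih, ih, choose_mul_prod_range_sub_succ_succ]
      ring

theorem rLah_orthogonality_falling_general (n k r s : ℕ) :
    (n.choose k : ℤ) * ∏ i ∈ range (n - k), (2 * (s : ℤ) - 2 * r - i) =
      ∑ j ∈ Icc k n, (-1) ^ (n - j) * rLah r n j * rLah s j k := by
  have hvanish : ∀ j ∈ range (n + 1), j ∉ Icc k n →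
      (-1 : ℤ) ^ (n - j) * rLah r n j * rLah s j k = 0 := fun j hj hjk ↦ by
    rw [rLah_eq_zero_of_lt s (by simp at hj hjk; omega), mul_zero]
  calc _ = (-1) ^ n * altLahSum r s n k := by
        rw [altLahSum_eq, ← mul_assoc, pow_mul_pow_eq_one n (by simp), one_mul]
    _ = ∑ j ∈ range (n + 1), (-1) ^ (n - j) * rLah r n j * rLah s j k := by
      rw [altLahSum, mul_sum]
      refine sum_congr rfl fun j hj ↦ ?_
      rw [neg_one_pow_sub_of_le (Nat.lt_succ_iff.mp (mem_range.mp hj))]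
      ring
    _ = _ := (sum_subset (fun j hj ↦ by simp at hj ⊢; omega) hvanish).symm

theorem rLah_orthogonality_falling (n k r s : ℕ) (hkn : k ≤ n) (hrs : r < s) :
    (n.choose k : ℤ) * ∏ i ∈ range (n - k), (2 * (s : ℤ) - 2 * r - i) =
      ∑ j ∈ Icc k n, (-1) ^ (n - j) * rLah r n j * rLah s j k :=
  rLah_orthogonality_falling_general n k r s
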